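/- arXiv:1306.3355 — 2 statements merged into one kernel-verified Lean document; each statement's English description precedes it below -/
import Mathlib

section
/- For n ≥ 2, the total number of occurrences of the vincular pattern 23-1 in Flatten(π) summed over all permutations π of [n] equals the total number of occurrences of 32-1 in Flatten(π) summed over all permutations π of [n]. -/
open scoped Classical

noncomputable def cycList {n : ℕ} (σ : Equiv.Perm (Fin n)) (x : Fin n) : List (Fin n) :=
  (List.range (Function.minimalPeriod σ x)).map (fun k => (⇑σ)^[k] x)

/-- The flattened form of a permutation: cycles in standard cycle form
(ordered by smallest elements, smallest first in each cycle), parentheses erased,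
with values in `{1,…,n}`. -/
noncomputable def flattenPerm {n : ℕ} (σ : Equiv.Perm (Fin n)) : List ℕ :=
  (((List.finRange n).filter (fun x => decide (∀ k < n, x ≤ (⇑σ)^[k] x))).flatMap
    (cycList σ)).map (fun x => (x : ℕ) + 1)

/-- Number of occurrences of the vincular pattern determined by `P` in `w`:
pairs of positions `i < j` (0-indexed, `i ≥ 1`) with `P w_{i-1} w_i w_j`. -/
noncomputable def vinOcc (P : ℕ → ℕ → ℕ → Prop) (w : List ℕ) : ℕ :=
  ((Finset.range w.length ×ˢ Finset.range w.length).filter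
    (fun p => 0 < p.1 ∧ p.1 < p.2 ∧
      P (w.getD (p.1 - 1) 0) (w.getD p.1 0) (w.getD p.2 0))).card

/-!
Write `w = Flatten(π)` and fix positions `i < j` with `w_j < w_{i-1}` and `w_j < w_i`. A cycle
minimum is smaller than every later letter of `w`, so neither `w_{i-1}` nor `w_i` is a cycle minimum;
as `w_i` does not start a cycle, `w_i = π(w_{i-1})`. Conjugating `π` by the transposition
`(w_{i-1} w_i)` therefore keeps the cycle minima and swaps exactly these two letters of `w`. This
involution exchanges the permutations with a 23-1 occurrence at `(i, j)` and those with a 32-1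
occurrence there, so the two totals agree position by position.
-/

open Equiv Equiv.Perm Function Finset

lemma sameCycle_iff_exists_iterate {α : Type*} [Finite α] {f : Perm α} {x y : α} :
    f.SameCycle x y ↔ ∃ k, f^[k] x = y := by
  refine ⟨fun h => ?_, fun ⟨k, hk⟩ => ⟨k, by simpa [← Perm.iterate_eq_pow] using hk⟩⟩
  simpa [Perm.iterate_eq_pow] using h.exists_nat_pow_eq

section CycleMin

variable {α : Type*} [LinearOrder α] (σ : Perm α)

def IsCycleMin (x : α) : Prop := ∀ y, σ.SameCycle x y → x ≤ y

variable {σ}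

lemma IsCycleMin.eq_of_sameCycle {x y : α} (hx : IsCycleMin σ x) (hy : IsCycleMin σ y)
    (h : σ.SameCycle x y) : x = y :=
  le_antisymm (hx y h) (hy x h.symm)

lemma IsCycleMin.lt_of_sameCycle {x y : α} (hx : IsCycleMin σ x) (h : σ.SameCycle x y)
    (hne : x ≠ y) : x < y :=
  (hx y h).lt_of_ne hne

variable (σ)

lemma exists_isCycleMin_sameCycle [Fintype α] (x : α) : ∃ m, IsCycleMin σ m ∧ σ.SameCycle m x := by
  obtain ⟨m, hm, hmin⟩ := (univ.filter (σ.SameCycle x)).exists_min_image id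
    ⟨x, by simp [SameCycle.refl]⟩
  simp only [mem_filter, mem_univ, true_and, id] at hm hmin
  exact ⟨m, fun y hy => hmin y (hm.trans hy), hm.symm⟩

lemma isCycleMin_conj_swap {a b : α} (hab : σ.SameCycle a b) (x : α) :
    IsCycleMin (swap a b * σ * swap a b) x ↔ IsCycleMin σ x := by
  have hswap : ∀ z, σ.SameCycle (swap a b z) z := fun z => by
    rcases eq_or_ne z a with rfl | hza
    · simpa using hab.symm
    rcases eq_or_ne z b with rfl | hzb
    · simpa using hab
    · simp [swap_apply_of_ne_of_ne hza hzb, SameCycle.refl]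
  have hconj : ∀ y, (swap a b * σ * swap a b).SameCycle x y ↔ σ.SameCycle x y := fun y => by
    have := sameCycle_conj (g := swap a b) (f := σ) (x := x) (y := y)
    rw [swap_inv] at this
    rw [this]
    exact ⟨fun h => (hswap x).symm.trans (h.trans (hswap y)),
      fun h => (hswap x).trans (h.trans (hswap y).symm)⟩
  simp only [IsCycleMin, hconj]

end CycleMin

variable {n : ℕ} (σ : Perm (Fin n))

lemma coe_cycList (x : Fin n) : (cycList σ x : Cycle (Fin n)) = periodicOrbit σ x :=
  (periodicOrbit_def _ _).symm

lemma mem_cycList {x y : Fin n} : y ∈ cycList σ x ↔ σ.SameCycle x y := by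
  rw [← Cycle.mem_coe_iff, coe_cycList, mem_periodicOrbit_iff (σ.injective.mem_periodicPts x),
    sameCycle_iff_exists_iterate]

lemma nodup_cycList (x : Fin n) : (cycList σ x).Nodup :=
  Cycle.nodup_coe_iff.1 (coe_cycList σ x ▸ nodup_periodicOrbit)

lemma head?_cycList (x : Fin n) : (cycList σ x).head? = some x := by
  obtain ⟨m, hm⟩ := Nat.exists_eq_add_one_of_ne_zero
    (minimalPeriod_pos_of_mem_periodicPts (σ.injective.mem_periodicPts x)).ne'
  rw [cycList, hm, List.range_succ_eq_map]
  rfl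

lemma isChain_cycList (x : Fin n) : (cycList σ x).IsChain (fun u v => v = σ u) := by
  rw [cycList, List.isChain_map, List.isChain_range]
  exact fun m _ => iterate_succ_apply' _ _ _

lemma cycList_conj (g : Perm (Fin n)) (x : Fin n) :
    cycList (g * σ * g⁻¹) (g x) = (cycList σ x).map g := by
  have hsemi : Semiconj g σ ⇑(g * σ * g⁻¹) := fun y => by simp [Perm.mul_apply]
  have hper : minimalPeriod (g * σ * g⁻¹) (g x) = minimalPeriod σ x := by
    refine minimalPeriod_eq_minimalPeriod_iff.2 fun k => ?_
    rw [IsPeriodicPt, IsFixedPt, ← hsemi.iterate_right k x, g.injective.eq_iff]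
    rfl
  simp only [cycList, hper, List.map_map]
  exact List.map_congr_left fun k _ => hsemi.iterate_right k x |>.symm

lemma isCycleMin_iff_forall_iterate {x : Fin n} : IsCycleMin σ x ↔ ∀ k < n, x ≤ σ^[k] x := by
  refine ⟨fun h k _ => h _ (sameCycle_iff_exists_iterate.2 ⟨k, rfl⟩), fun h y hy => ?_⟩
  obtain ⟨k, rfl⟩ := sameCycle_iff_exists_iterate.1 hy
  rw [← iterate_mod_minimalPeriod_eq]
  refine h _ ((Nat.mod_lt _ ?_).trans_le ?_)
  · exact minimalPeriod_pos_of_mem_periodicPts (σ.injective.mem_periodicPts x)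
  · simpa using minimalPeriod_le_card (f := σ) (x := x)

noncomputable def cycleMins : List (Fin n) :=
  (List.finRange n).filter (fun x => decide (∀ k < n, x ≤ σ^[k] x))

lemma mem_cycleMins {x : Fin n} : x ∈ cycleMins σ ↔ IsCycleMin σ x := by
  simp [cycleMins, isCycleMin_iff_forall_iterate]

lemma pairwise_lt_cycleMins : (cycleMins σ).Pairwise (· < ·) :=
  (List.pairwise_lt_finRange n).filter _

lemma cycleMins_conj_swap {a b : Fin n} (hab : σ.SameCycle a b) :
    cycleMins (swap a b * σ * swap a b) = cycleMins σ := by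
  refine List.filter_congr fun x _ => ?_
  simp only [← isCycleMin_iff_forall_iterate, isCycleMin_conj_swap σ hab]

noncomputable def flatWord : List (Fin n) := (cycleMins σ).flatMap (cycList σ)

lemma flattenPerm_eq_map_flatWord :
    flattenPerm σ = (flatWord σ).map (fun x : Fin n => (x : ℕ) + 1) := by
  simp [flattenPerm, flatWord, cycleMins, ← List.map_eq_flatMap]

lemma mem_flatWord (x : Fin n) : x ∈ flatWord σ := by
  obtain ⟨m, hm, hmx⟩ := exists_isCycleMin_sameCycle σ x
  exact List.mem_flatMap.2 ⟨m, (mem_cycleMins σ).2 hm, (mem_cycList σ).2 hmx⟩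

lemma nodup_flatWord : (flatWord σ).Nodup := by
  refine List.nodup_flatMap.2 ⟨fun x _ => nodup_cycList σ x, ?_⟩
  refine (pairwise_lt_cycleMins σ).imp_of_mem fun {x y} hx hy hxy => ?_
  refine List.disjoint_left.2 fun z hzx hzy => hxy.ne ?_
  exact ((mem_cycleMins σ).1 hx).eq_of_sameCycle ((mem_cycleMins σ).1 hy)
    (((mem_cycList σ).1 hzx).trans ((mem_cycList σ).1 hzy).symm)

@[simp]
lemma length_flatWord : (flatWord σ).length = n := by
  simpa using (List.toFinset_card_of_nodup (nodup_flatWord σ)).symm.trans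
    (congrArg card (eq_univ_of_forall fun x => List.mem_toFinset.2 (mem_flatWord σ x)))

lemma length_flattenPerm : (flattenPerm σ).length = n := by
  simp [flattenPerm_eq_map_flatWord]

lemma getD_flattenPerm {p : ℕ} (hp : p < n) :
    (flattenPerm σ).getD p 0 = ((flatWord σ)[p]'(by simpa using hp) : ℕ) + 1 := by
  rw [flattenPerm_eq_map_flatWord, List.getD_eq_getElem _ _ (by simpa using hp), List.getElem_map]

lemma getD_flattenPerm_lt_getD_iff {p q : ℕ} (hp : p < n) (hq : q < n) :
    (flattenPerm σ).getD p 0 < (flattenPerm σ).getD q 0 ↔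
      (flatWord σ)[p]'(by simpa using hp) < (flatWord σ)[q]'(by simpa using hq) := by
  rw [getD_flattenPerm σ hp, getD_flattenPerm σ hq, add_lt_add_iff_right, Fin.val_fin_lt]

lemma pairwise_flatWord : (flatWord σ).Pairwise (fun u v => IsCycleMin σ u → u < v) := by
  refine List.pairwise_flatMap.2 ⟨fun x _ => ?_, ?_⟩
  · refine (nodup_cycList σ x).imp_of_mem fun {u v} hu hv hne hmin => ?_
    exact hmin.lt_of_sameCycle (((mem_cycList σ).1 hu).symm.trans ((mem_cycList σ).1 hv)) hne
  · refine (pairwise_lt_cycleMins σ).imp_of_mem fun {x y} hx hy hxy u hu v hv hmin => ?_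
    have hux : u = x := hmin.eq_of_sameCycle ((mem_cycleMins σ).1 hx) ((mem_cycList σ).1 hu).symm
    exact hux ▸ hxy.trans_le ((mem_cycleMins σ).1 hy v ((mem_cycList σ).1 hv))

lemma isChain_flatWord : (flatWord σ).IsChain (fun u v => IsCycleMin σ v ∨ v = σ u) := by
  rw [flatWord, List.flatMap_def, List.isChain_flatten]
  · refine ⟨List.forall_mem_map.2 fun x _ => (isChain_cycList σ x).imp fun _ _ => Or.inr, ?_⟩
    rw [List.isChain_map]
    refine ((pairwise_lt_cycleMins σ).imp_of_mem fun {_ y} _ hy _ _ _ v hv => ?_).isChain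
    rw [head?_cycList, Option.mem_some_iff] at hv
    exact Or.inl (hv ▸ (mem_cycleMins σ).1 hy)
  · intro h
    obtain ⟨x, -, hx⟩ := List.mem_map.1 h
    simpa [hx] using head?_cycList σ x

lemma not_isCycleMin_of_getElem_lt {p q : ℕ} (hpq : p < q) (hq : q < (flatWord σ).length)
    (h : (flatWord σ)[q] < (flatWord σ)[p]) : ¬IsCycleMin σ (flatWord σ)[p] := fun hmin =>
  h.not_gt (List.pairwise_iff_getElem.1 (pairwise_flatWord σ) p q (hpq.trans hq) hq hpq hmin)

lemma getElem_succ_flatWord {p : ℕ} (hp : p + 1 < (flatWord σ).length)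
    (h : ¬IsCycleMin σ (flatWord σ)[p + 1]) : (flatWord σ)[p + 1] = σ (flatWord σ)[p] :=
  (List.isChain_iff_getElem.1 (isChain_flatWord σ) p hp).resolve_left h

lemma flatWord_conj_swap {a b : Fin n} (hab : σ.SameCycle a b) (ha : ¬IsCycleMin σ a)
    (hb : ¬IsCycleMin σ b) : flatWord (swap a b * σ * swap a b) = (flatWord σ).map (swap a b) := by
  rw [flatWord, flatWord, cycleMins_conj_swap σ hab, List.map_flatMap]
  refine List.flatMap_congr fun x hx => ?_
  have hx : swap a b x = x := swap_apply_of_ne_of_ne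
    (fun h => ha (h ▸ (mem_cycleMins σ).1 hx)) (fun h => hb (h ▸ (mem_cycleMins σ).1 hx))
  simpa [hx] using cycList_conj σ (swap a b) x

noncomputable def swapAdjacent (k : ℕ) (hk : k + 1 < n) : Perm (Fin n) :=
  let a := (flatWord σ)[k]'(by simp; omega)
  let b := (flatWord σ)[k + 1]'(by simpa using hk)
  Equiv.swap a b * σ * Equiv.swap a b

section SwapAdjacent

variable {σ} {k j : ℕ} (hkj : k + 1 < j) (hj : j < (flatWord σ).length)
  (hck : (flatWord σ)[j] < (flatWord σ)[k]) (hck' : (flatWord σ)[j] < (flatWord σ)[k + 1])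
include hkj hj hck hck'

lemma flatWord_swapAdjacent :
    flatWord (swapAdjacent σ k (by simp at hj; omega)) =
      (flatWord σ).map (Equiv.swap (flatWord σ)[k] (flatWord σ)[k + 1]) := by
  have ha := not_isCycleMin_of_getElem_lt σ (by omega) hj hck
  have hb := not_isCycleMin_of_getElem_lt σ hkj hj hck'
  have hab : σ.SameCycle (flatWord σ)[k] (flatWord σ)[k + 1] := by
    rw [getElem_succ_flatWord σ (by omega) hb]
    exact sameCycle_apply_right.2 (SameCycle.refl σ _)
  exact flatWord_conj_swap σ hab ha hb

lemma swapAdjacent_swapAdjacent :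
    swapAdjacent (swapAdjacent σ k (by simp at hj; omega)) k (by simp at hj; omega) = σ := by
  have hW := flatWord_swapAdjacent hkj hj hck hck'
  simp only [swapAdjacent] at hW ⊢
  simp only [hW, List.getElem_map, swap_apply_left, swap_apply_right, swap_comm (flatWord σ)[k + 1]]
  simp [mul_assoc]

lemma getD_flattenPerm_swapAdjacent :
    let w := flattenPerm σ
    let w' := flattenPerm (swapAdjacent σ k (by simp at hj; omega))
    w'.getD k 0 = w.getD (k + 1) 0 ∧ w'.getD (k + 1) 0 = w.getD k 0 ∧ w'.getD j 0 = w.getD j 0 := by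
  have hjn : j < n := by simpa using hj
  simp only [getD_flattenPerm _ (show k < n by omega), getD_flattenPerm _ (show k + 1 < n by omega),
    getD_flattenPerm _ hjn, flatWord_swapAdjacent hkj hj hck hck', List.getElem_map,
    swap_apply_left, swap_apply_right, swap_apply_of_ne_of_ne hck.ne hck'.ne, and_self]

end SwapAdjacent

lemma card_filter_231_eq_card_filter_321 {k j : ℕ} (hkj : k + 1 < j) (hj : j < n) :
    #{σ : Perm (Fin n) | (flattenPerm σ).getD j 0 < (flattenPerm σ).getD k 0 ∧
        (flattenPerm σ).getD k 0 < (flattenPerm σ).getD (k + 1) 0} =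
      #{σ : Perm (Fin n) | (flattenPerm σ).getD j 0 < (flattenPerm σ).getD (k + 1) 0 ∧
        (flattenPerm σ).getD (k + 1) 0 < (flattenPerm σ).getD k 0} := by
  have swap_spec : ∀ σ : Perm (Fin n), (flattenPerm σ).getD j 0 < (flattenPerm σ).getD k 0 →
      (flattenPerm σ).getD j 0 < (flattenPerm σ).getD (k + 1) 0 →
      let w := flattenPerm σ
      let τ := swapAdjacent σ k (by omega)
      ((flattenPerm τ).getD k 0 = w.getD (k + 1) 0 ∧ (flattenPerm τ).getD (k + 1) 0 = w.getD k 0 ∧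
        (flattenPerm τ).getD j 0 = w.getD j 0) ∧ swapAdjacent τ k (by omega) = σ := by
    intro σ hck hck'
    have hj' : j < (flatWord σ).length := by simpa using hj
    rw [getD_flattenPerm_lt_getD_iff σ hj (by omega)] at hck hck'
    exact ⟨getD_flattenPerm_swapAdjacent hkj hj' hck hck',
      swapAdjacent_swapAdjacent hkj hj' hck hck'⟩
  refine card_nbij' (swapAdjacent · k (by omega)) (swapAdjacent · k (by omega)) ?_ ?_ ?_ ?_
  all_goals
    intro σ hσ
    simp only [coe_filter, mem_univ, true_and, Set.mem_ofPred_eq] at hσ ⊢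
  · obtain ⟨⟨e₁, e₂, e₃⟩, -⟩ := swap_spec σ hσ.1 (hσ.1.trans hσ.2)
    rwa [e₁, e₂, e₃]
  · obtain ⟨⟨e₁, e₂, e₃⟩, -⟩ := swap_spec σ (hσ.1.trans hσ.2) hσ.1
    rwa [e₁, e₂, e₃]
  · exact (swap_spec σ hσ.1 (hσ.1.trans hσ.2)).2
  · exact (swap_spec σ (hσ.1.trans hσ.2) hσ.1).2

lemma sum_vinOcc_eq_sum_card {ι : Type*} (s : Finset ι) (w : ι → List ℕ) {m : ℕ}
    (hw : ∀ x ∈ s, (w x).length = m) (P : ℕ → ℕ → ℕ → Prop) :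
    ∑ x ∈ s, vinOcc P (w x) = ∑ p ∈ range m ×ˢ range m,
      #{x ∈ s | 0 < p.1 ∧ p.1 < p.2 ∧
        P ((w x).getD (p.1 - 1) 0) ((w x).getD p.1 0) ((w x).getD p.2 0)} := by
  simp only [card_filter]
  rw [sum_comm]
  refine sum_congr rfl fun x hx => ?_
  rw [vinOcc, hw x hx, card_filter]

theorem total_occurrences_231_eq_321_general (n : ℕ) :
    (∑ σ : Equiv.Perm (Fin n), vinOcc (fun a b c => c < a ∧ a < b) (flattenPerm σ))
      = ∑ σ : Equiv.Perm (Fin n), vinOcc (fun a b c => c < b ∧ b < a) (flattenPerm σ) := by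
  simp only [sum_vinOcc_eq_sum_card _ _ fun σ _ => length_flattenPerm σ]
  refine sum_congr rfl fun ⟨i, j⟩ hij => ?_
  by_cases h : 0 < i ∧ i < j
  · obtain ⟨k, rfl⟩ := Nat.exists_eq_add_one_of_ne_zero h.1.ne'
    simp only [h, true_and, Nat.add_sub_cancel]
    exact card_filter_231_eq_card_filter_321 h.2 (mem_range.1 (mem_product.1 hij).2)
  · simp [← and_assoc, h]

theorem total_occurrences_231_eq_321 (n : ℕ) (hn : 2 ≤ n) :
    (∑ σ : Equiv.Perm (Fin n), vinOcc (fun a b c => c < a ∧ a < b) (flattenPerm σ))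
      = ∑ σ : Equiv.Perm (Fin n), vinOcc (fun a b c => c < b ∧ b < a) (flattenPerm σ) :=
  total_occurrences_231_eq_321_general n
end

section
/- Let g_n(0) for the pattern 23-1 be defined by g_1(0) = 1 and the recurrence g_n(0) = 2·∑_{j=1}^{n-1} C(n-2, j-1) · g_{n-j}(0) for n ≥ 2. Then g_n(0) = ∑_{k=1}^{n-1} 2^k · S(n-1, k) for all n ≥ 2. -/
/-- Stirling numbers of the second kind. -/
def stirling2 : ℕ → ℕ → ℕ
  | 0, 0 => 1
  | 0, _ + 1 => 0
  | _ + 1, 0 => 0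
  | n + 1, k + 1 => (k + 1) * stirling2 n (k + 1) + stirling2 n k

/-!
The right-hand side is `touchard 2 (n - 1)`, the Touchard polynomial `∑ₖ S(m, k) xᵏ` at `x = 2`.
Sorting the partitions of `{0, …, m}` by the block `B ∋ m` gives
`S(m + 1, k + 1) = ∑ᵢ C(m, i) S(i, k)`, where `i = m + 1 - |B|` counts the elements outside `B`;
hence `touchard x (m + 1) = x ∑ᵢ C(m, i) touchard x i`. After the substitution `i = n - j - 1`
this is the recurrence of `g`, so `g (m + 1) = touchard 2 m` by strong induction.
-/

open Finset Nat

theorem stirling2_eq_stirlingSecond : stirling2 = stirlingSecond := by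
  funext n k
  induction n generalizing k with
  | zero => cases k <;> rfl
  | succ n ih => cases k <;> simp [stirling2, stirlingSecond, ih]

namespace Nat

theorem stirlingSecond_succ_succ_eq_sum_choose_mul (n k : ℕ) :
    stirlingSecond (n + 1) (k + 1) = ∑ i ∈ range (n + 1), n.choose i * stirlingSecond i k := by
  induction n generalizing k with
  | zero => cases k <;> rfl
  | succ n ih =>
    have pascal := sum_choose_succ_mul (R := ℕ) (fun i _ => stirlingSecond i k) n
    simp only [Nat.cast_id] at pascal
    rw [pascal, ← ih]
    cases k with
    | zero => simp [stirlingSecond_succ_succ]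
    | succ k =>
      simp only [stirlingSecond_succ_succ, mul_add, sum_add_distrib, mul_left_comm _ (k + 1),
        ← mul_sum, ← ih]
      ring

end Nat

section Touchard

variable {R : Type*} [CommSemiring R]

def touchard (x : R) (m : ℕ) : R :=
  ∑ k ∈ range (m + 1), x ^ k * stirlingSecond m k

theorem touchard_zero (x : R) : touchard x 0 = 1 := by
  simp [touchard]

theorem touchard_eq_sum_range_of_le (x : R) {m N : ℕ} (h : m ≤ N) :
    touchard x m = ∑ k ∈ range (N + 1), x ^ k * stirlingSecond m k := by
  refine sum_subset (range_subset_range.2 (by omega)) fun k _ hk => ?_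
  rw [stirlingSecond_eq_zero_of_lt (by simpa using hk), Nat.cast_zero, mul_zero]

theorem touchard_eq_sum_Icc (x : R) {m : ℕ} (hm : m ≠ 0) :
    touchard x m = ∑ k ∈ Icc 1 m, x ^ k * stirlingSecond m k := by
  obtain ⟨m, rfl⟩ := exists_eq_add_one_of_ne_zero hm
  rw [touchard, range_eq_Ico, sum_eq_sum_Ico_succ_bot (succ_pos _)]
  simp [Ico_add_one_right_eq_Icc]

theorem touchard_succ (x : R) (m : ℕ) :
    touchard x (m + 1) = x * ∑ i ∈ range (m + 1), m.choose i * touchard x i := by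
  rw [touchard, sum_range_succ', stirlingSecond_succ_zero, Nat.cast_zero, mul_zero, add_zero]
  simp only [stirlingSecond_succ_succ_eq_sum_choose_mul, Nat.cast_sum, Nat.cast_mul, mul_sum]
  rw [sum_comm]
  refine sum_congr rfl fun i hi => ?_
  rw [touchard_eq_sum_range_of_le x (mem_range_succ_iff.1 hi), mul_sum, mul_sum]
  exact sum_congr rfl fun k _ => by ring

end Touchard

theorem sum_Icc_choose_pred_smul_eq_sum_range {M : Type*} [AddCommMonoid M] (f : ℕ → M) (m : ℕ) :
    ∑ j ∈ Icc 1 (m + 1), m.choose (j - 1) • f (m + 2 - j) =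
      ∑ i ∈ range (m + 1), m.choose i • f (i + 1) := by
  rw [← Ico_add_one_right_eq_Icc, sum_Ico_eq_sum_range, ← sum_range_reflect]
  refine sum_congr (by simp) fun i hi => ?_
  have hi : i ≤ m := mem_range_succ_iff.1 (by simpa using hi)
  rw [show 1 + (m + 1 + 1 - 1 - 1 - i) - 1 = m - i by omega, choose_symm hi,
    show m + 2 - (1 + (m + 1 + 1 - 1 - 1 - i)) = i + 1 by omega]

theorem avoid_231_recurrence_solution (g : ℕ → ℕ) (h1 : g 1 = 1)
    (hrec : ∀ n, 2 ≤ n →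
      g n = 2 * ∑ j ∈ Finset.Icc 1 (n - 1), Nat.choose (n - 2) (j - 1) * g (n - j)) :
    ∀ n, 2 ≤ n → g n = ∑ k ∈ Finset.Icc 1 (n - 1), 2 ^ k * stirling2 (n - 1) k := by
  have hg : ∀ m, g (m + 1) = touchard 2 m := by
    intro m
    induction m using Nat.strong_induction_on with
    | _ m ih =>
      cases m with
      | zero => rw [h1, touchard_zero]
      | succ m =>
        have hrec' := hrec (m + 2) (by omega)
        simp only [← smul_eq_mul (a := Nat.choose _ _), show m + 2 - 1 = m + 1 by rfl,
          show m + 2 - 2 = m by rfl, sum_Icc_choose_pred_smul_eq_sum_range] at hrec'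
        rw [hrec', touchard_succ]
        refine congrArg _ (sum_congr rfl fun i hi => ?_)
        rw [smul_eq_mul, ih i (mem_range_succ_iff.1 hi |>.trans_lt (lt_succ_self m)), Nat.cast_id]
  intro n hn
  obtain ⟨m, rfl⟩ := Nat.exists_eq_add_of_le' hn
  rw [hg, stirling2_eq_stirlingSecond, touchard_eq_sum_Icc 2 (succ_ne_zero m)]
  simp
end
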